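/- The function F(s) := Γ(3/2−s)·Γ(2s−1)·(1 − 2^{1−2s})·ζ(2s−1) / (π^{3/2}·Γ(s)) tends to (3/(4π²))·ζ′(−2) as s tends to −1/2 through complex values s ≠ −1/2. -/
import Mathlib

open Real Complex Filter Topology

lemma aux_ne_neg_nat (x : ℝ) (hx : ∀ m : ℕ, x ≠ -(m : ℝ)) :
    ∀ m : ℕ, (x : ℂ) ≠ -(m : ℂ) := by
  intro m h
  apply hx m
  have := congrArg Complex.re h
  simpa using this

theorem identity_casimir_limit :
    Filter.Tendsto
      (fun s : ℂ =>
        Complex.Gamma (3 / 2 - s) * Complex.Gamma (2 * s - 1) *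
            (1 - (2 : ℂ) ^ (1 - 2 * s)) * riemannZeta (2 * s - 1) /
          (((Real.pi ^ ((3 : ℝ) / 2) : ℝ) : ℂ) * Complex.Gamma s))
      (nhdsWithin (-(1 / 2) : ℂ) {(-(1 / 2) : ℂ)}ᶜ)
      (nhds ((3 / (4 * (Real.pi : ℂ) ^ 2)) * deriv riemannZeta (-2))) := by
  set c : ℂ := -(1/2) with hc
  set P : ℂ := ((Real.pi ^ ((3 : ℝ) / 2) : ℝ) : ℂ) with hP
  set Z' : ℂ := deriv riemannZeta (-2) with hZ'
  have hπ : (Real.pi : ℂ) ≠ 0 := by simpa using Real.pi_ne_zero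
  have hz0 : riemannZeta (-2) = 0 := by
    have := riemannZeta_neg_two_mul_nat_add_one 0
    norm_num at this
    exact this
  have hslope : Tendsto (fun z : ℂ => riemannZeta z / (z + 2)) (𝓝[≠] (-2 : ℂ)) (𝓝 Z') := by
    have hd : HasDerivAt riemannZeta Z' (-2) :=
      (differentiableAt_riemannZeta (by norm_num)).hasDerivAt
    refine (hasDerivAt_iff_tendsto_slope.mp hd).congr fun z => ?_
    simp [slope, hz0, sub_neg_eq_add, div_eq_inv_mul]
  have hmap : Tendsto (fun s : ℂ => 2 * s - 1) (𝓝[≠] c) (𝓝[≠] (-2 : ℂ)) := by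
    rw [tendsto_nhdsWithin_iff]
    constructor
    · have h : Tendsto (fun s : ℂ => 2 * s - 1) (𝓝 c) (𝓝 (2 * c - 1)) :=
        ((continuous_const.mul continuous_id).sub continuous_const).tendsto c
      have he : (2 : ℂ) * c - 1 = -2 := by rw [hc]; ring
      rw [he] at h
      exact h.mono_left (nhdsWithin_le_nhds : 𝓝[≠] c ≤ 𝓝 c)
    · filter_upwards [self_mem_nhdsWithin] with s hs
      simp only [Set.mem_compl_iff, Set.mem_singleton_iff] at hs ⊢
      intro h
      apply hs
      have h2 : (2 : ℂ) * s = 2 * c := by rw [hc]; linear_combination h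
      exact mul_left_cancel₀ two_ne_zero h2
  have hzeta : Tendsto (fun s : ℂ => riemannZeta (2 * s - 1) / (2 * s + 1)) (𝓝[≠] c) (𝓝 Z') := by
    refine (hslope.comp hmap).congr fun s => ?_
    simp only [Function.comp]
    ring_nf
  have hA : Tendsto (fun s : ℂ => Complex.Gamma (3 / 2 - s)) (𝓝[≠] c) (𝓝 1) := by
    have hcont : ContinuousAt Complex.Gamma (2 : ℂ) := by
      refine (Complex.differentiableAt_Gamma 2 ?_).continuousAt
      have := aux_ne_neg_nat 2 (fun m h => by
        have : (0:ℝ) ≤ (m:ℝ) := Nat.cast_nonneg m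
        linarith [h])
      intro m
      simpa using this m
    have h1 : Tendsto (fun s : ℂ => 3 / 2 - s) (𝓝 c) (𝓝 (2 : ℂ)) := by
      have h : Tendsto (fun s : ℂ => 3 / 2 - s) (𝓝 c) (𝓝 (3 / 2 - c)) :=
        (Continuous.tendsto (by continuity) c)
      have he : (3 : ℂ) / 2 - c = 2 := by rw [hc]; ring
      rwa [he] at h
    have h2 := (hcont.tendsto.comp h1).mono_left (nhdsWithin_le_nhds : 𝓝[≠] c ≤ 𝓝 c)
    have hG2 : Complex.Gamma 2 = 1 := by
      have h := Complex.Gamma_nat_eq_factorial 1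
      norm_num at h
      convert h using 2
      norm_num
    rwa [hG2] at h2
  have hB : Tendsto (fun s : ℂ => Complex.Gamma (2 * s + 2)) (𝓝[≠] c) (𝓝 1) := by
    have hcont : ContinuousAt Complex.Gamma (1 : ℂ) := by
      refine (Complex.differentiableAt_Gamma 1 ?_).continuousAt
      have := aux_ne_neg_nat 1 (fun m h => by
        have : (0:ℝ) ≤ (m:ℝ) := Nat.cast_nonneg m
        linarith [h])
      intro m
      simpa using this m
    have h1 : Tendsto (fun s : ℂ => 2 * s + 2) (𝓝 c) (𝓝 (1 : ℂ)) := by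
      have h : Tendsto (fun s : ℂ => 2 * s + 2) (𝓝 c) (𝓝 (2 * c + 2)) :=
        (Continuous.tendsto (by continuity) c)
      have he : (2 : ℂ) * c + 2 = 1 := by rw [hc]; ring
      rwa [he] at h
    have h2 := (hcont.tendsto.comp h1).mono_left (nhdsWithin_le_nhds : 𝓝[≠] c ≤ 𝓝 c)
    rwa [Complex.Gamma_one] at h2
  have hC : Tendsto (fun s : ℂ => 1 - (2 : ℂ) ^ (1 - 2 * s)) (𝓝[≠] c) (𝓝 (-3 : ℂ)) := by
    have hcont : ContinuousAt (fun w : ℂ => (2 : ℂ) ^ w) (2 : ℂ) :=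
      continuousAt_const_cpow two_ne_zero
    have h1 : Tendsto (fun s : ℂ => 1 - 2 * s) (𝓝 c) (𝓝 (2 : ℂ)) := by
      have h : Tendsto (fun s : ℂ => 1 - 2 * s) (𝓝 c) (𝓝 (1 - 2 * c)) :=
        (Continuous.tendsto (by continuity) c)
      have he : (1 : ℂ) - 2 * c = 2 := by rw [hc]; ring
      rwa [he] at h
    have h2 := (hcont.tendsto.comp h1).mono_left (nhdsWithin_le_nhds : 𝓝[≠] c ≤ 𝓝 c)
    have h4 : (2 : ℂ) ^ (2 : ℂ) = 4 := by
      rw [show (2:ℂ) = ((2:ℕ):ℂ) by norm_num, Complex.cpow_natCast]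
      norm_num
    rw [h4] at h2
    have h5 := (tendsto_const_nhds (x := (1:ℂ)) (f := 𝓝[≠] c)).sub h2
    have he : (1 : ℂ) - 4 = -3 := by norm_num
    rwa [he] at h5
  have hD : Tendsto (fun s : ℂ => (2 * s - 1) * (2 * s)) (𝓝[≠] c) (𝓝 (2 : ℂ)) := by
    have h : Tendsto (fun s : ℂ => (2 * s - 1) * (2 * s)) (𝓝 c)
        (𝓝 ((2 * c - 1) * (2 * c))) :=
      (((continuous_const.mul continuous_id).sub continuous_const).mul
        (continuous_const.mul continuous_id)).tendsto c
    have he : (2 * c - 1) * (2 * c) = 2 := by rw [hc]; ring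
    rw [he] at h
    exact h.mono_left (nhdsWithin_le_nhds : 𝓝[≠] c ≤ 𝓝 c)
  have hcnat : ∀ m : ℕ, c ≠ -(m : ℂ) := by
    rw [hc]
    have : ((-(1/2) : ℝ) : ℂ) = -(1/2 : ℂ) := by push_cast; ring
    rw [← this]
    apply aux_ne_neg_nat
    intro m h
    rcases Nat.eq_zero_or_pos m with h0 | h1
    · rw [h0] at h; norm_num at h
    · have : (1:ℝ) ≤ (m:ℝ) := by exact_mod_cast h1
      linarith [h]
  have hGc : Complex.Gamma c = -2 * (Real.pi : ℂ) ^ (1 / 2 : ℂ) := by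
    have h1 : Complex.Gamma (c + 1) = c * Complex.Gamma c :=
      Complex.Gamma_add_one c (by rw [hc]; norm_num)
    have h2 : c + 1 = 1 / 2 := by rw [hc]; ring
    rw [h2, Complex.Gamma_one_half_eq] at h1
    rw [hc] at h1 ⊢
    linear_combination 2 * h1
  have hGcne : Complex.Gamma c ≠ 0 := by
    rw [hGc]
    refine mul_ne_zero (by norm_num) ?_
    simp only [ne_eq, Complex.cpow_eq_zero_iff]
    tauto
  have hcontc : ContinuousAt Complex.Gamma c :=
    (Complex.differentiableAt_Gamma c hcnat).continuousAt
  have hE : Tendsto (fun s : ℂ => P * Complex.Gamma s) (𝓝[≠] c)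
      (𝓝 (P * (-2 * (Real.pi : ℂ) ^ (1 / 2 : ℂ)))) := by
    have h := (tendsto_const_nhds (x := P) (f := 𝓝 c)).mul hcontc.tendsto
    rw [hGc] at h
    exact h.mono_left (nhdsWithin_le_nhds : 𝓝[≠] c ≤ 𝓝 c)
  have hDen : P * (-2 * (Real.pi : ℂ) ^ (1 / 2 : ℂ)) = -2 * (Real.pi : ℂ) ^ 2 := by
    have hp : (Real.pi : ℂ) ^ (1 / 2 : ℂ) = ((Real.pi ^ ((1:ℝ)/2) : ℝ) : ℂ) := by
      rw [Complex.ofReal_cpow Real.pi_pos.le]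
      norm_num
    have h32 : Real.pi ^ ((3:ℝ)/2) * Real.pi ^ ((1:ℝ)/2) = Real.pi ^ (2:ℝ) := by
      rw [← Real.rpow_add Real.pi_pos]; norm_num
    have h2' : Real.pi ^ (2:ℝ) = Real.pi ^ (2:ℕ) := by
      rw [← Real.rpow_natCast]; norm_num
    have hreal : Real.pi ^ ((3:ℝ)/2) * (-2 * Real.pi ^ ((1:ℝ)/2)) = -2 * Real.pi ^ 2 := by
      linear_combination (-2:ℝ) * h32 - 2 * h2'
    rw [hP, hp, show ((Real.pi ^ ((3:ℝ)/2) : ℝ) : ℂ) * (-2 * ((Real.pi ^ ((1:ℝ)/2) : ℝ) : ℂ))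
      = (((Real.pi ^ ((3:ℝ)/2) * (-2 * Real.pi ^ ((1:ℝ)/2))) : ℝ) : ℂ) by push_cast; ring,
      hreal]
    push_cast
    ring
  have hDenne : P * (-2 * (Real.pi : ℂ) ^ (1 / 2 : ℂ)) ≠ 0 := by
    rw [hDen]
    exact mul_ne_zero (by norm_num) (pow_ne_zero 2 hπ)
  have keyval : (1 : ℂ) * 1 * (-3) * Z' / 2 / (-2 * (Real.pi : ℂ) ^ 2)
      = 3 / (4 * (Real.pi : ℂ) ^ 2) * Z' := by
    rw [div_div, div_mul_eq_mul_div, div_eq_div_iff (by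
        exact mul_ne_zero two_ne_zero (mul_ne_zero (by norm_num) (pow_ne_zero 2 hπ)))
      (by exact mul_ne_zero (by norm_num) (pow_ne_zero 2 hπ))]
    ring
  have hKey : Tendsto
      (fun s : ℂ => Complex.Gamma (3 / 2 - s) * Complex.Gamma (2 * s + 2) *
          (1 - (2 : ℂ) ^ (1 - 2 * s)) * (riemannZeta (2 * s - 1) / (2 * s + 1)) /
          ((2 * s - 1) * (2 * s)) / (P * Complex.Gamma s))
      (𝓝[≠] c) (𝓝 (3 / (4 * (Real.pi : ℂ) ^ 2) * Z')) := by
    have hnum := ((hA.mul hB).mul hC).mul hzeta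
    have h1 := hnum.div hD (by norm_num)
    have h2 := h1.div hE hDenne
    rw [hDen, keyval] at h2
    exact h2
  refine Tendsto.congr' ?_ hKey
  have hne0 : ∀ᶠ s in 𝓝[≠] c, s ≠ 0 :=
    (eventually_ne_nhds (by rw [hc]; norm_num : c ≠ (0:ℂ))).filter_mono (nhdsWithin_le_nhds : 𝓝[≠] c ≤ 𝓝 c)
  have hneh : ∀ᶠ s in 𝓝[≠] c, s ≠ 1/2 :=
    (eventually_ne_nhds (by rw [hc]; norm_num : c ≠ (1/2:ℂ))).filter_mono (nhdsWithin_le_nhds : 𝓝[≠] c ≤ 𝓝 c)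
  have hGne : ∀ᶠ s in 𝓝[≠] c, Complex.Gamma s ≠ 0 :=
    (hcontc.eventually_ne hGcne).filter_mono (nhdsWithin_le_nhds : 𝓝[≠] c ≤ 𝓝 c)
  have hPne : P ≠ 0 := by
    rw [hP]
    simpa using (Real.rpow_pos_of_pos Real.pi_pos ((3:ℝ)/2)).ne'
  filter_upwards [hne0, hneh, hGne, self_mem_nhdsWithin] with s hs0 hsh hsG hsc
  have h1 : 2 * s + 1 ≠ 0 := by
    intro h
    apply hsc
    simp only [Set.mem_singleton_iff, hc]
    linear_combination h / 2
  have h2 : (2 : ℂ) * s ≠ 0 := by simpa using hs0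
  have h3 : 2 * s - 1 ≠ 0 := by
    intro h
    apply hsh
    linear_combination h / 2
  have hg : Complex.Gamma (2 * s + 2)
      = (2 * s + 1) * (2 * s) * (2 * s - 1) * Complex.Gamma (2 * s - 1) := by
    have e1 : Complex.Gamma (2 * s + 2) = (2 * s + 1) * Complex.Gamma (2 * s + 1) := by
      have h := Complex.Gamma_add_one (2 * s + 1) h1
      rwa [show 2 * s + 1 + 1 = 2 * s + 2 by ring] at h
    have e2 : Complex.Gamma (2 * s + 1) = (2 * s) * Complex.Gamma (2 * s) :=
      Complex.Gamma_add_one (2 * s) h2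
    have e3 : Complex.Gamma (2 * s) = (2 * s - 1) * Complex.Gamma (2 * s - 1) := by
      have h := Complex.Gamma_add_one (2 * s - 1) h3
      rwa [show 2 * s - 1 + 1 = 2 * s by ring] at h
    rw [e1, e2, e3]; ring
  rw [hg]
  field_simp
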